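/- arXiv:2106.15398 — 5 statements merged into one kernel-verified Lean document; each statement's English description precedes it below -/
import Mathlib

section
/- Let L ⊆ E* be an event log, TS a τ-free transition system encoding L, and N a free-choice workflow net with labelling over E ∪ {τ}. Let σ ∈ L be a trace accepted by N, let r be a region of TS, and let N_r be the net obtained from N by adding the place corresponding to r. Then σ is accepted by N_r. -/
open scoped Classical

noncomputable section

/-- A transition system with possible silent transitions: labels are `Option E`,
`none` playing the role of the silent event τ. -/
structure TransSys (S E : Type) where
  step : S → Option E → S → Prop
  init : S
  fin : Set S

namespace TransSys

variable {S E : Type}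

/-- A transition system is τ-free if no transition is labelled by τ (= `none`). -/
def TauFree (ts : TransSys S E) : Prop :=
  ∀ s s', ¬ ts.step s none s'

/-- `e` is an entering event of the set of states `r`:
some `e`-labelled transition enters `r`. -/
def Enters (ts : TransSys S E) (r : Set S) (e : E) : Prop :=
  ∃ s s', ts.step s (some e) s' ∧ s ∉ r ∧ s' ∈ r

/-- `e` is an exiting event of the set of states `r`:
some `e`-labelled transition exits `r`. -/
def Exits (ts : TransSys S E) (r : Set S) (e : E) : Prop :=
  ∃ s s', ts.step s (some e) s' ∧ s ∈ r ∧ s' ∉ r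

/-- A region: for every event, all transitions labelled by it enter `r`,
or all exit `r`, or all do not cross `r`. -/
def IsRegion (ts : TransSys S E) (r : Set S) : Prop :=
  ∀ e : E,
    (∀ s s', ts.step s (some e) s' → s ∉ r ∧ s' ∈ r) ∨
    (∀ s s', ts.step s (some e) s' → s ∈ r ∧ s' ∉ r) ∨
    (∀ s s', ts.step s (some e) s' → (s ∈ r ↔ s' ∈ r))

/-- Labelled paths in a transition system. -/
inductive Path (ts : TransSys S E) : S → List (Option E) → S → Prop
  | nil (s : S) : Path ts s [] s
  | cons {s s' s'' : S} {e : Option E} {l : List (Option E)} :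
      ts.step s e s' → Path ts s' l s'' → Path ts s (e :: l) s''

/-- A trace over `E` is feasible if some path from the initial state to a final
state has it as its sequence of non-τ labels. -/
def Feasible (ts : TransSys S E) (σ : List E) : Prop :=
  ∃ (l : List (Option E)) (sf : S),
    ts.Path ts.init l sf ∧ sf ∈ ts.fin ∧ l.filterMap id = σ

/-- The language accepted by a transition system. -/
def Lang (ts : TransSys S E) : Set (List E) := {σ | ts.Feasible σ}

/-- `ts` encodes the event log `L`: it is τ-free and accepts exactly `L`. -/
def Encodes (ts : TransSys S E) (L : Set (List E)) : Prop :=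
  ts.TauFree ∧ ts.Lang = L

/-- Reachability via τ-labelled transitions only. -/
def tauReach (ts : TransSys S E) : S → S → Prop :=
  Relation.ReflTransGen (fun a b => ts.step a none b)

/-- The τ-closure of a transition system: a τ-free transition system on the same
states with a transition `(s, e, s')` whenever `s'` is reachable from `s` by a
sequence of τ-transitions followed by one `e`-transition; final states are
those from which a final state of `ts` is reachable by τ-transitions only. -/
def tauClosure (ts : TransSys S E) : TransSys S E where
  step := fun s e s' => ∃ e' : E, e = some e' ∧
    ∃ u, ts.tauReach s u ∧ ts.step u (some e') s'
  init := ts.init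
  fin := {s | ∃ f ∈ ts.fin, ts.tauReach s f}

end TransSys

/-- A Petri net with places `P`, transitions `T`, labelled over `E ∪ {τ}`
(`none` = τ), in which distinct non-silent transitions carry distinct labels. -/
structure PetriNet (P T E : Type) where
  flowPT : P → T → Prop
  flowTP : T → P → Prop
  label : T → Option E
  label_inj : ∀ t₁ t₂ : T, label t₁ ≠ none → label t₁ = label t₂ → t₁ = t₂

namespace PetriNet

variable {P T E : Type}

/-- A Petri net is τ-free if no transition is silent. -/
def TauFree (N : PetriNet P T E) : Prop := ∀ t, N.label t ≠ none

/-- The preset of a transition, as a multiset (marking) over places. -/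
def pre (N : PetriNet P T E) (t : T) (p : P) : ℕ :=
  if N.flowPT p t then 1 else 0

/-- The postset of a transition, as a multiset (marking) over places. -/
def post (N : PetriNet P T E) (t : T) (p : P) : ℕ :=
  if N.flowTP t p then 1 else 0

/-- The preset of a transition, as a set of places. -/
def preSet (N : PetriNet P T E) (t : T) : Set P := {p | N.flowPT p t}

/-- Transition `t` is enabled in marking `m` and firing it yields `m'`. -/
def Fires (N : PetriNet P T E) (m : P → ℕ) (t : T) (m' : P → ℕ) : Prop :=
  (∀ p, N.pre t p ≤ m p) ∧ ∀ p, m' p = m p - N.pre t p + N.post t p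

/-- Firing sequences. -/
inductive FiringSeq (N : PetriNet P T E) : (P → ℕ) → List T → (P → ℕ) → Prop
  | nil (m : P → ℕ) : FiringSeq N m [] m
  | cons {m m' m'' : P → ℕ} {t : T} {l : List T} :
      N.Fires m t m' → FiringSeq N m' l m'' → FiringSeq N m (t :: l) m''

/-- Reachability between markings. -/
def Reach (N : PetriNet P T E) : (P → ℕ) → (P → ℕ) → Prop :=
  Relation.ReflTransGen (fun m m' => ∃ t, N.Fires m t m')

/-- A trace `σ` is accepted: some firing sequence from `m0` to a final marking
has `σ` as its sequence of non-τ labels. -/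
def Accepts (N : PetriNet P T E) (m0 : P → ℕ) (Mf : Set (P → ℕ)) (σ : List E) : Prop :=
  ∃ (l : List T) (mf : P → ℕ),
    N.FiringSeq m0 l mf ∧ mf ∈ Mf ∧ l.filterMap N.label = σ

/-- The language of a marked Petri net with final markings `Mf`. -/
def Lang (N : PetriNet P T E) (m0 : P → ℕ) (Mf : Set (P → ℕ)) : Set (List E) :=
  {σ | N.Accepts m0 Mf σ}

/-- Two transitions are in a free-choice relation. -/
def FreeChoiceRel (N : PetriNet P T E) (t₁ t₂ : T) : Prop :=
  N.preSet t₁ ∩ N.preSet t₂ = ∅ ∨ N.preSet t₁ = N.preSet t₂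

/-- A Petri net is free-choice. -/
def FreeChoice (N : PetriNet P T E) : Prop := ∀ t₁ t₂, N.FreeChoiceRel t₁ t₂

/-- Safety: every reachable marking puts at most one token in each place. -/
def Safe (N : PetriNet P T E) (m0 : P → ℕ) : Prop :=
  ∀ m, N.Reach m0 m → ∀ p, m p ≤ 1

/-- The reachability graph of a marked Petri net with final markings `Mf`,
as a transition system over the reachable markings. -/
def reachGraph (N : PetriNet P T E) (m0 : P → ℕ) (Mf : Set (P → ℕ)) :
    TransSys {m : P → ℕ // N.Reach m0 m} E where
  step := fun m e m' => ∃ t, N.label t = e ∧ N.Fires m.1 t m'.1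
  init := ⟨m0, Relation.ReflTransGen.refl⟩
  fin := {m | m.1 ∈ Mf}

/-- The edge relation of the underlying graph of a Petri net (on `P ⊕ T`). -/
def edge (N : PetriNet P T E) : (P ⊕ T) → (P ⊕ T) → Prop :=
  fun x y => match x, y with
    | Sum.inl p, Sum.inr t => N.flowPT p t
    | Sum.inr t, Sum.inl p => N.flowTP t p
    | _, _ => False

/-- `N` is a workflow net with source place `i` and sink place `o`. -/
def IsWorkflow (N : PetriNet P T E) (i o : P) : Prop :=
  (∀ t, ¬ N.flowTP t i) ∧ (∀ t, ¬ N.flowPT o t) ∧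
  ∀ x : P ⊕ T, Relation.ReflTransGen N.edge (Sum.inl i) x ∧
    Relation.ReflTransGen N.edge x (Sum.inl o)

/-- Soundness of a workflow net with source `i` and sink `o`
(initial marking `[i]`, final marking `[o]`). -/
def SoundAt (N : PetriNet P T E) (i o : P) : Prop :=
  (∀ m, N.Reach (fun p => if p = i then 1 else 0) m →
      N.Reach m (fun p => if p = o then 1 else 0)) ∧
  (∀ m, N.Reach (fun p => if p = i then 1 else 0) m → 1 ≤ m o →
      m = (fun p => if p = o then 1 else 0)) ∧
  (∀ t : T, ∃ m m', N.Reach (fun p => if p = i then 1 else 0) m ∧ N.Fires m t m')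

end PetriNet

/-- The net obtained from `N` by adding, for each `j : ι`, a fresh place
corresponding to the region `rs j` of the transition system `ts`:
the new place has an incoming arc from every transition whose label is an
entering event of `rs j` and an outgoing arc to every transition whose label is
an exiting event of `rs j`. -/
def addPlaces {P T E S ι : Type} (N : PetriNet P T E) (ts : TransSys S E)
    (rs : ι → Set S) : PetriNet (P ⊕ ι) T E where
  flowPT := fun q t => match q with
    | Sum.inl p => N.flowPT p t
    | Sum.inr j => ∃ e, N.label t = some e ∧ ts.Exits (rs j) e
  flowTP := fun t q => match q with
    | Sum.inl p => N.flowTP t p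
    | Sum.inr j => ∃ e, N.label t = some e ∧ ts.Enters (rs j) e
  label := N.label
  label_inj := N.label_inj

/-- The initial marking of the net with added places: each new place carries a
token iff the initial state of `ts` belongs to the corresponding region. -/
def addInit {P E S ι : Type} (ts : TransSys S E) (rs : ι → Set S)
    (m0 : P → ℕ) : (P ⊕ ι) → ℕ :=
  fun q => match q with
    | Sum.inl p => m0 p
    | Sum.inr j => if ts.init ∈ rs j then 1 else 0

/-- The final markings of the net with added places: the old final markings,
where each new place may additionally carry one token provided its region
contains some final state of `ts`. -/
def addFinals {P E S ι : Type} (ts : TransSys S E) (rs : ι → Set S)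
    (Mf : Set (P → ℕ)) : Set ((P ⊕ ι) → ℕ) :=
  {m' | (fun p => m' (Sum.inl p)) ∈ Mf ∧
    ∀ j, m' (Sum.inr j) = 0 ∨ (m' (Sum.inr j) = 1 ∧ ∃ s ∈ ts.fin, s ∈ rs j)}

/-- A workflow net: a Petri net with a distinguished source and sink. -/
structure WorkflowNet (P T E : Type) extends PetriNet P T E where
  src : P
  snk : P
  isWorkflow : toPetriNet.IsWorkflow src snk

namespace WorkflowNet

variable {P T E : Type}

/-- The initial marking `[i]` of a workflow net. -/
def initM (N : WorkflowNet P T E) : P → ℕ := fun p => if p = N.src then 1 else 0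

/-- The final marking `[o]` of a workflow net. -/
def finM (N : WorkflowNet P T E) : P → ℕ := fun p => if p = N.snk then 1 else 0

/-- A trace is accepted by a workflow net (from `[i]` to `[o]`). -/
def Accepts (N : WorkflowNet P T E) (σ : List E) : Prop :=
  N.toPetriNet.Accepts N.initM {N.finM} σ

/-- The language of a workflow net. -/
def Lang (N : WorkflowNet P T E) : Set (List E) :=
  N.toPetriNet.Lang N.initM {N.finM}

end WorkflowNet

section AuxLemmas

variable {P T E S : Type}

lemma region_exits {ts : TransSys S E} {r : Set S} (hr : ts.IsRegion r) {e : E}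
    (he : ts.Exits r e) : ∀ s s', ts.step s (some e) s' → s ∈ r ∧ s' ∉ r := by
  obtain ⟨a, b, hab, ha, hb⟩ := he
  rcases hr e with h | h | h
  · exact absurd ha (h a b hab).1
  · exact h
  · exact absurd ((h a b hab).mp ha) hb

lemma region_enters {ts : TransSys S E} {r : Set S} (hr : ts.IsRegion r) {e : E}
    (he : ts.Enters r e) : ∀ s s', ts.step s (some e) s' → s ∉ r ∧ s' ∈ r := by
  obtain ⟨a, b, hab, ha, hb⟩ := he
  rcases hr e with h | h | h
  · exact h
  · exact absurd (h a b hab).1 ha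
  · exact absurd ((h a b hab).mpr hb) ha

lemma region_cross {ts : TransSys S E} {r : Set S} {e : E} {s s' : S}
    (hst : ts.step s (some e) s') (hne : ¬ ts.Enters r e) (hnx : ¬ ts.Exits r e) :
    (s ∈ r ↔ s' ∈ r) := by
  constructor
  · intro hs; by_contra hs'; exact hnx ⟨s, s', hst, hs, hs'⟩
  · intro hs'; by_contra hs; exact hne ⟨s, s', hst, hs, hs'⟩

/-- Extend a marking of `N` by a token on the fresh place iff `s ∈ r`. -/
def extMark {r : Set S} (m : P → ℕ) (s : S) : (P ⊕ Unit) → ℕ :=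
  fun q => match q with
    | Sum.inl p => m p
    | Sum.inr _ => if s ∈ r then 1 else 0

/-- Main lifting lemma: a firing sequence of `N` whose visible labels match a
path of `ts` lifts to the net with the region place added. -/
lemma seq_lift (N : PetriNet P T E) (ts : TransSys S E)
    (htf : ts.TauFree) {r : Set S} (hr : ts.IsRegion r)
    {m mf : P → ℕ} {lT : List T} (hFS : N.FiringSeq m lT mf) :
    ∀ {s sf : S} {lts : List (Option E)}, ts.Path s lts sf →
      lts.filterMap id = lT.filterMap N.label →
      (addPlaces N ts (fun _ : Unit => r)).FiringSeq
        (extMark (r := r) m s) lT (extMark (r := r) mf sf) := by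
  induction hFS with
  | nil m =>
    intro s sf lts hpath heq
    have hlts : s = sf := by
      cases hpath with
      | nil => rfl
      | cons hstep hp =>
        rename_i s' s'' e l
        cases e with
        | none => exact absurd hstep (htf _ _)
        | some e' => simp [List.filterMap] at heq
    subst hlts
    exact PetriNet.FiringSeq.nil _
  | cons hf hrest ih =>
    rename_i m m' m'' t lT'
    intro s sf lts hpath heq
    cases hel : N.label t with
    | none =>
      -- silent transition: fresh place untouched, ts state unchanged
      have heq' : lts.filterMap id = lT'.filterMap N.label := by
        simpa [List.filterMap, hel] using heq
      refine PetriNet.FiringSeq.cons ?_ (ih hpath heq')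
      constructor
      · intro q
        cases q with
        | inl p =>
          exact hf.1 p
        | inr u =>
          simp [PetriNet.pre, addPlaces, extMark, hel]
      · intro q
        cases q with
        | inl p =>
          exact hf.2 p
        | inr u =>
          simp [PetriNet.pre, PetriNet.post, addPlaces, extMark, hel]
    | some e =>
      -- visible transition: must match the head of the ts path
      cases hpath with
      | nil => simp [List.filterMap, hel] at heq
      | cons hstep hp =>
        rename_i s' s'' o l
        cases o with
        | none => exact absurd hstep (htf _ _)
        | some e' =>
          have heq2 : e' :: l.filterMap id = e :: lT'.filterMap N.label := by
            simpa [List.filterMap, hel] using heq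
          have hee : e = e' := by
            exact ((List.cons.injEq _ _ _ _ ▸ heq2).1).symm
          subst hee
          have heq' : l.filterMap id = lT'.filterMap N.label := by
            exact (List.cons.injEq _ _ _ _ ▸ heq2).2
          refine PetriNet.FiringSeq.cons ?_ (ih hp heq')
          have hpre : ∀ p, (addPlaces N ts (fun _ : Unit => r)).pre t (Sum.inl p) = N.pre t p := by
            intro p; rfl
          have hpost : ∀ p, (addPlaces N ts (fun _ : Unit => r)).post t (Sum.inl p) = N.post t p := by
            intro p; rfl
          have hpreR : ∀ u, (addPlaces N ts (fun _ : Unit => r)).pre t (Sum.inr u)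
              = if ts.Exits r e then 1 else 0 := by
            intro u; simp [PetriNet.pre, addPlaces, hel]
          have hpostR : ∀ u, (addPlaces N ts (fun _ : Unit => r)).post t (Sum.inr u)
              = if ts.Enters r e then 1 else 0 := by
            intro u; simp [PetriNet.post, addPlaces, hel]
          constructor
          · intro q
            cases q with
            | inl p => rw [hpre]; exact hf.1 p
            | inr u =>
              rw [hpreR]
              by_cases hx : ts.Exits r e
              · have hs := (region_exits hr hx _ _ hstep).1
                simp [extMark, hx, hs]
              · simp [extMark, hx]
          · intro q
            cases q with
            | inl p => rw [hpre, hpost]; exact hf.2 p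
            | inr u =>
              rw [hpreR, hpostR]
              by_cases hx : ts.Exits r e
              · obtain ⟨hs, hs'⟩ := region_exits hr hx _ _ hstep
                have hne : ¬ ts.Enters r e := by
                  intro hEn
                  exact (region_enters hr hEn _ _ hstep).1 hs
                simp [extMark, hx, hs, hs', hne]
              · by_cases hn : ts.Enters r e
                · obtain ⟨hs, hs'⟩ := region_enters hr hn _ _ hstep
                  simp [extMark, hx, hn, hs, hs']
                · have hiff := region_cross hstep hn hx
                  simp [extMark, hx, hn, hiff]

end AuxLemmas

/-- adding to a free-choice workflow net the place corresponding
to a region of a transition system encoding the log preserves acceptance of any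
log trace accepted by the net. -/
theorem fitness_preserved_single_region {P T E S : Type} [Finite P] [Finite T]
    (L : Set (List E)) (ts : TransSys S E) (hEnc : ts.Encodes L)
    (N : WorkflowNet P T E) (hfc : N.toPetriNet.FreeChoice)
    (σ : List E) (hσL : σ ∈ L) (hσN : N.Accepts σ)
    (r : Set S) (hr : ts.IsRegion r) :
    (addPlaces N.toPetriNet ts (fun _ : Unit => r)).Accepts
      (addInit ts (fun _ : Unit => r) N.initM)
      (addFinals ts (fun _ : Unit => r) {N.finM}) σ := by
  obtain ⟨htf, hLang⟩ := hEnc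
  have hσts : ts.Feasible σ := by rw [← hLang] at hσL; exact hσL
  obtain ⟨lts, sf, hpath, hfin, hσeq⟩ := hσts
  obtain ⟨lT, mf, hFS, hmf, hlab⟩ := hσN
  have hmf' : mf = N.finM := by simpa using hmf
  subst hmf'
  have heq : lts.filterMap id = lT.filterMap N.toPetriNet.label := by
    rw [hσeq, hlab]
  have hlift := seq_lift N.toPetriNet ts htf hr hFS hpath heq
  refine ⟨lT, extMark (r := r) N.finM sf, ?_, ?_, ?_⟩
  · have hinit : addInit ts (fun _ : Unit => r) N.initM
        = extMark (r := r) N.initM ts.init := by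
      funext q; cases q with
      | inl p => rfl
      | inr u => rfl
    rw [hinit]
    exact hlift
  · refine ⟨by simp [extMark], ?_⟩
    intro j
    by_cases hs : sf ∈ r
    · exact Or.inr ⟨by simp [extMark, hs], sf, hfin, hs⟩
    · exact Or.inl (by simp [extMark, hs])
  · exact hlab
end
end

section
/- Let L ⊆ E* be an event log, TS a τ-free transition system encoding L, and N a free-choice workflow net with labelling over E ∪ {τ}. Let σ ∈ L be a trace accepted by N, let r_1, …, r_k be finitely many regions of TS, and let N' be the net obtained from N by successively adding, for each region r_j, the place corresponding to r_j. Then σ is accepted by N' (fitness is preserved). -/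
open scoped Classical

noncomputable section

section AuxFitness

variable {P T E S ι : Type}

/-- Augment a marking with region-indicator tokens for the current state. -/
def augM (rs : ι → Set S) (m : P → ℕ) (s : S) : (P ⊕ ι) → ℕ :=
  fun q => match q with
    | Sum.inl p => m p
    | Sum.inr j => if s ∈ rs j then 1 else 0

lemma region_exits_iff {ts : TransSys S E} {r : Set S} (hr : ts.IsRegion r)
    {s s' : S} {e : E} (h : ts.step s (some e) s') :
    ts.Exits r e ↔ (s ∈ r ∧ s' ∉ r) := by
  constructor
  · rintro ⟨u, u', hu, hur, hur'⟩
    rcases hr e with hc | hc | hc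
    · exact absurd hur (hc u u' hu).1
    · exact hc s s' h
    · exact absurd ((hc u u' hu).1 hur) hur'
  · rintro ⟨h1, h2⟩
    exact ⟨s, s', h, h1, h2⟩

lemma region_enters_iff {ts : TransSys S E} {r : Set S} (hr : ts.IsRegion r)
    {s s' : S} {e : E} (h : ts.step s (some e) s') :
    ts.Enters r e ↔ (s ∉ r ∧ s' ∈ r) := by
  constructor
  · rintro ⟨u, u', hu, hur, hur'⟩
    rcases hr e with hc | hc | hc
    · exact hc s s' h
    · exact absurd (hc u u' hu).1 hur
    · exact absurd ((hc u u' hu).2 hur') hur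
  · rintro ⟨h1, h2⟩
    exact ⟨s, s', h, h1, h2⟩

lemma path_tau_nil {ts : TransSys S E} (hτ : ts.TauFree) :
    ∀ {s sf : S} {lp : List (Option E)}, ts.Path s lp sf →
      lp.filterMap id = [] → s = sf := by
  intro s sf lp hp
  induction hp with
  | nil => intro _; rfl
  | cons hstep hp ih =>
    rename_i s s' s'' e l
    intro hfm
    cases e with
    | none => exact absurd hstep (hτ _ _)
    | some e => simp at hfm

lemma aux_fseq {N : PetriNet P T E} {ts : TransSys S E} {rs : ι → Set S}
    (hτ : ts.TauFree) (hrs : ∀ j, ts.IsRegion (rs j)) :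
    ∀ (l : List T) (m mf : P → ℕ), N.FiringSeq m l mf →
      ∀ (lp : List (Option E)) (s sf : S), ts.Path s lp sf →
        l.filterMap N.label = lp.filterMap id →
        (addPlaces N ts rs).FiringSeq (augM rs m s) l (augM rs mf sf) := by
  intro l m mf hfs
  induction hfs with
  | nil m =>
    intro lp s sf hp hfm
    have : s = sf := path_tau_nil hτ hp hfm.symm
    subst this
    exact PetriNet.FiringSeq.nil _
  | cons hfire hfs ih =>
    rename_i m m₁ mf t l
    intro lp s sf hp hfm
    cases hlab : N.label t with
    | none =>
      have hfm' : l.filterMap N.label = lp.filterMap id := by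
        simpa [List.filterMap_cons, hlab] using hfm
      refine PetriNet.FiringSeq.cons ?_ (ih lp s sf hp hfm')
      have hpre : ∀ j : ι, (addPlaces N ts rs).pre t (Sum.inr j) = 0 := by
        intro j
        simp only [PetriNet.pre, addPlaces, hlab]
        rw [if_neg]; rintro ⟨e, he, -⟩; simp [hlab] at he
      have hpost : ∀ j : ι, (addPlaces N ts rs).post t (Sum.inr j) = 0 := by
        intro j
        simp only [PetriNet.post, addPlaces, hlab]
        rw [if_neg]; rintro ⟨e, he, -⟩; simp [hlab] at he
      refine ⟨?_, ?_⟩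
      · rintro (p | j)
        · exact hfire.1 p
        · simp [hpre j, augM]
      · rintro (p | j)
        · exact hfire.2 p
        · simp [hpre j, hpost j, augM]
    | some e =>
      cases hp with
      | nil => simp [List.filterMap_cons, hlab] at hfm
      | cons hstep hp' =>
        rename_i s₁ e₀ lp'
        cases e₀ with
        | none => exact absurd hstep (hτ _ _)
        | some e' =>
          have he' : e' = e ∧ l.filterMap N.label = lp'.filterMap id := by
            have := hfm
            simp only [List.filterMap_cons, hlab, id] at this
            exact ⟨(List.cons.injEq _ _ _ _ ▸ this).1.symm,
              (List.cons.injEq _ _ _ _ ▸ this).2⟩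
          obtain ⟨rfl, hfm'⟩ := he'
          refine PetriNet.FiringSeq.cons ?_ (ih lp' s₁ sf hp' hfm')
          have hpre : ∀ j : ι, (addPlaces N ts rs).pre t (Sum.inr j)
              = if s ∈ rs j ∧ s₁ ∉ rs j then 1 else 0 := by
            intro j
            simp only [PetriNet.pre, addPlaces]
            congr 1
            rw [eq_iff_iff]
            constructor
            · rintro ⟨e₁, he₁, hex⟩
              rw [hlab] at he₁; cases he₁
              exact (region_exits_iff (hrs j) hstep).1 hex
            · intro hx
              exact ⟨e', hlab, (region_exits_iff (hrs j) hstep).2 hx⟩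
          have hpost : ∀ j : ι, (addPlaces N ts rs).post t (Sum.inr j)
              = if s ∉ rs j ∧ s₁ ∈ rs j then 1 else 0 := by
            intro j
            simp only [PetriNet.post, addPlaces]
            congr 1
            rw [eq_iff_iff]
            constructor
            · rintro ⟨e₁, he₁, hen⟩
              rw [hlab] at he₁; cases he₁
              exact (region_enters_iff (hrs j) hstep).1 hen
            · intro hx
              exact ⟨e', hlab, (region_enters_iff (hrs j) hstep).2 hx⟩
          refine ⟨?_, ?_⟩
          · rintro (p | j)
            · exact hfire.1 p
            · rw [hpre j]
              by_cases hA : s ∈ rs j <;> by_cases hB : s₁ ∈ rs j <;>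
                simp [augM, hA, hB]
          · rintro (p | j)
            · exact hfire.2 p
            · rw [hpre j, hpost j]
              by_cases hA : s ∈ rs j <;> by_cases hB : s₁ ∈ rs j <;>
                simp [augM, hA, hB]

end AuxFitness

/-- Fitness: adding to a free-choice workflow net the places
corresponding to finitely many regions of a transition system encoding the log
preserves acceptance of any log trace accepted by the net. -/
theorem fitness_preserved {P T E S : Type} [Finite P] [Finite T]
    (L : Set (List E)) (ts : TransSys S E) (hEnc : ts.Encodes L)
    (N : WorkflowNet P T E) (hfc : N.toPetriNet.FreeChoice)
    (σ : List E) (hσL : σ ∈ L) (hσN : N.Accepts σ)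
    (k : ℕ) (rs : Fin k → Set S) (hrs : ∀ j, ts.IsRegion (rs j)) :
    (addPlaces N.toPetriNet ts rs).Accepts
      (addInit ts rs N.initM)
      (addFinals ts rs {N.finM}) σ := by
  obtain ⟨hτ, hLang⟩ := hEnc
  have hσts : ts.Feasible σ := by rw [← hLang] at hσL; exact hσL
  obtain ⟨lp, sf, hpath, hsf, hfmp⟩ := hσts
  obtain ⟨l, mf, hfs, hmf, hfml⟩ := hσN
  have hmf' : mf = N.finM := hmf
  subst hmf'
  have hfseq := aux_fseq (N := N.toPetriNet) (rs := rs) hτ hrs l N.initM N.finM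
    hfs lp ts.init sf hpath (by rw [hfml, hfmp])
  refine ⟨l, augM rs N.finM sf, ?_, ?_, ?_⟩
  · have hinit : addInit ts rs N.initM = augM rs N.initM ts.init := by
      funext q; cases q <;> rfl
    rw [hinit]
    exact hfseq
  · constructor
    · show (fun p => augM rs N.finM sf (Sum.inl p)) ∈ ({N.finM} : Set (P → ℕ))
      rfl
    · intro j
      by_cases h : sf ∈ rs j
      · exact Or.inr ⟨by simp [augM, h], sf, hsf, h⟩
      · exact Or.inl (by simp [augM, h])
  · exact hfml
end
end

section
/- Let r be a region of a τ-free transition system TS with set of entering events B and set of exiting events A, and let s_0 →e_1→ s_1 →e_2→ ⋯ →e_n→ s_n be a path in TS. If e_k ∈ A for some index k and e_j ∉ B for all j with 1 ≤ j < k, then s_j ∈ r for all j with 0 ≤ j ≤ k−1; in particular, the first state s_0 of the path belongs to r. -/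
open scoped Classical

noncomputable section

/-- along a path, before an occurrence of an exiting event of a
region `r` with no earlier occurrence of an entering event of `r`, all preceding
states of the path (in particular the first one) belong to `r`. -/
theorem states_in_region_before_exiting {S E : Type}
    (ts : TransSys S E) (hτ : ts.TauFree)
    (r : Set S) (hr : ts.IsRegion r)
    (n : ℕ) (states : ℕ → S) (events : ℕ → E)
    (hpath : ∀ j, j < n →
      ts.step (states j) (some (events (j + 1))) (states (j + 1)))
    (k : ℕ) (hk1 : 1 ≤ k) (hkn : k ≤ n)
    (hexit : ts.Exits r (events k))
    (hnoent : ∀ j, 1 ≤ j → j < k → ¬ ts.Enters r (events j)) :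
    ∀ j, j ≤ k - 1 → states j ∈ r := by
  -- first: states (k-1) ∈ r, since events k exits r
  have hstep_k : ts.step (states (k - 1)) (some (events k)) (states k) := by
    have h := hpath (k - 1) (by omega)
    have hk' : k - 1 + 1 = k := by omega
    rwa [hk'] at h
  have hkm1 : states (k - 1) ∈ r := by
    rcases hr (events k) with h | h | h
    · exfalso
      obtain ⟨s, s', hs, hsr, hs'r⟩ := hexit
      exact hs'r (h s s' hs).2
    · exact (h _ _ hstep_k).1
    · exfalso
      obtain ⟨s, s', hs, hsr, hs'r⟩ := hexit
      exact hs'r ((h s s' hs).mp hsr)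
  -- backward step
  have hback : ∀ j, j + 1 ≤ k - 1 → states (j + 1) ∈ r → states j ∈ r := by
    intro j hj hj1
    have hstep : ts.step (states j) (some (events (j + 1))) (states (j + 1)) :=
      hpath j (by omega)
    rcases hr (events (j + 1)) with h | h | h
    · exfalso
      apply hnoent (j + 1) (by omega) (by omega)
      exact ⟨_, _, hstep, (h _ _ hstep).1, (h _ _ hstep).2⟩
    · exact (h _ _ hstep).1
    · exact (h _ _ hstep).mpr hj1
  have haux : ∀ m, m ≤ k - 1 → states (k - 1 - m) ∈ r := by
    intro m
    induction m with
    | zero => intro _; simpa using hkm1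
    | succ i ih =>
      intro hi
      have h1 : k - 1 - (i + 1) + 1 = k - 1 - i := by omega
      have := hback (k - 1 - (i + 1)) (by omega)
      rw [h1] at this
      exact this (ih (by omega))
  intro j hj
  have := haux (k - 1 - j) (by omega)
  have h2 : k - 1 - (k - 1 - j) = j := by omega
  rwa [h2] at this
end
end

section
/- Let TS be a τ-free transition system, r a region of TS, and N = (P, T, F, l) a Petri net labelled over E ∪ {τ} with distinct non-silent transitions carrying distinct labels, with initial marking m0 and final markings M_f. Let N_r be the net obtained from N by adding the place p corresponding to r. Suppose a trace σ = ⟨e_1,…,e_n⟩ is feasible in TS via a path s_0 →e_1→ s_1 → ⋯ →e_n→ s_n with s_0 the initial state of TS and s_n a final state, and suppose σ is accepted by N via a firing sequence m0 →t_1→ ⋯ →t_l→ m_l with m_l ∈ M_f whose sequence of non-τ labels equals σ. Then the same sequence of transitions t_1, …, t_l is firable in N_r from the initial marking of N_r, the resulting markings agree with those of N on every place of P, the marking of the new place p after any prefix of the firing sequence whose non-τ label sequence is ⟨e_1,…,e_k⟩ equals 1 if s_k ∈ r and 0 otherwise, and the final marking reached is a final marking of N_r; hence σ is accepted by N_r.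 -/
open scoped Classical

noncomputable section

lemma PetriNet.fires_det {P T E : Type} (N : PetriNet P T E) {m : P → ℕ} {t : T}
    {m1 m2 : P → ℕ} (h1 : N.Fires m t m1) (h2 : N.Fires m t m2) : m1 = m2 := by
  funext p; rw [h1.2 p, h2.2 p]

lemma PetriNet.seq_det {P T E : Type} (N : PetriNet P T E) {l : List T} {m m1 m2 : P → ℕ}
    (h1 : N.FiringSeq m l m1) (h2 : N.FiringSeq m l m2) : m1 = m2 := by
  induction l generalizing m with
  | nil => cases h1; cases h2; rfl
  | cons t l ih =>
    cases h1 with | cons hf1 hs1 =>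
    cases h2 with | cons hf2 hs2 =>
    exact ih (PetriNet.fires_det N hf1 hf2 ▸ hs1) hs2

lemma region_ext_seq {P T E S : Type}
    (ts : TransSys S E) (r : Set S) (hr : ts.IsRegion r)
    (N : PetriNet P T E) (states : ℕ → S) :
    ∀ (tl : List T) (k : ℕ) (σ' : List E) (m : P → ℕ) (m' : (P ⊕ Unit) → ℕ),
    (∀ p, m' (Sum.inl p) = m p) →
    m' (Sum.inr ()) = (if states k ∈ r then 1 else 0) →
    tl.filterMap N.label = σ' →
    (∀ i (hi : i < σ'.length),
      ts.step (states (k + i)) (some (σ'[i]'hi)) (states (k + i + 1))) →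
    ∀ mfin, N.FiringSeq m tl mfin →
    ∃ mfin', (addPlaces N ts (fun _ : Unit => r)).FiringSeq m' tl mfin' ∧
      (∀ p, mfin' (Sum.inl p) = mfin p) ∧
      mfin' (Sum.inr ()) = (if states (k + σ'.length) ∈ r then 1 else 0) := by
  intro tl
  induction tl with
  | nil =>
    intro k σ' m m' hagree hind hlab hstep mfin hseq
    cases hseq
    subst hlab
    exact ⟨m', PetriNet.FiringSeq.nil m', hagree, by simpa using hind⟩
  | cons t tl ih =>
    intro k σ' m m' hagree hind hlab hstep mfin hseq
    obtain ⟨m1, hf, hs⟩ : ∃ m1, N.Fires m t m1 ∧ N.FiringSeq m1 tl mfin := by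
      cases hseq with | cons hf hs => exact ⟨_, hf, hs⟩
    rcases hlt : N.label t with _ | e
    · -- silent transition
      simp only [List.filterMap_cons, hlt] at hlab
      have hflowPT : ¬ (addPlaces N ts (fun _ : Unit => r)).flowPT (Sum.inr ()) t := by
        rintro ⟨e', he', -⟩; rw [hlt] at he'; cases he'
      have hflowTP : ¬ (addPlaces N ts (fun _ : Unit => r)).flowTP t (Sum.inr ()) := by
        rintro ⟨e', he', -⟩; rw [hlt] at he'; cases he'
      set m1' : (P ⊕ Unit) → ℕ := Sum.elim m1 (fun _ => m' (Sum.inr ())) with hm1'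
      have hfire : (addPlaces N ts (fun _ : Unit => r)).Fires m' t m1' := by
        constructor
        · rintro (p | ⟨⟩)
          · show N.pre t p ≤ m' (Sum.inl p); rw [hagree p]; exact hf.1 p
          · simp [PetriNet.pre, hflowPT]
        · rintro (p | ⟨⟩)
          · show m1 p = m' (Sum.inl p) - N.pre t p + N.post t p
            rw [hagree p]; exact hf.2 p
          · show m' (Sum.inr ()) = _
            simp [PetriNet.pre, PetriNet.post, hflowPT, hflowTP]
      obtain ⟨mfin', hseq', ha', hi'⟩ :=
        ih k σ' m1 m1' (fun p => rfl) hind hlab hstep mfin hs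
      exact ⟨mfin', PetriNet.FiringSeq.cons hfire hseq', ha', hi'⟩
    · -- labelled transition
      simp only [List.filterMap_cons, hlt] at hlab
      subst hlab
      have step0 : ts.step (states k) (some e) (states (k + 1)) := by
        have := hstep 0 (by simp)
        simpa using this
      set σ'' := tl.filterMap N.label with hσ''
      -- compute pre/post on the new place
      have key : ∃ a b : ℕ,
          (addPlaces N ts (fun _ : Unit => r)).pre t (Sum.inr ()) = a ∧
          (addPlaces N ts (fun _ : Unit => r)).post t (Sum.inr ()) = b ∧
          a ≤ (if states k ∈ r then 1 else 0) ∧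
          (if states k ∈ r then 1 else 0) - a + b
            = (if states (k + 1) ∈ r then 1 else 0) := by
        have hflPT : (addPlaces N ts (fun _ : Unit => r)).flowPT (Sum.inr ()) t
            ↔ ts.Exits r e := by
          constructor
          · rintro ⟨e', he', hex⟩; rw [hlt] at he'; cases he'; exact hex
          · intro hex; exact ⟨e, hlt, hex⟩
        have hflTP : (addPlaces N ts (fun _ : Unit => r)).flowTP t (Sum.inr ())
            ↔ ts.Enters r e := by
          constructor
          · rintro ⟨e', he', hen⟩; rw [hlt] at he'; cases he'; exact hen
          · intro hen; exact ⟨e, hlt, hen⟩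
        rcases hr e with h1 | h2 | h3
        · have hk : states k ∉ r := (h1 _ _ step0).1
          have hk1 : states (k + 1) ∈ r := (h1 _ _ step0).2
          have hnoex : ¬ ts.Exits r e := by
            rintro ⟨s, s', hst, hsr, -⟩; exact (h1 _ _ hst).1 hsr
          have hen : ts.Enters r e := ⟨_, _, step0, hk, hk1⟩
          refine ⟨0, 1, ?_, ?_, by simp, by simp [hk, hk1]⟩
          · simp [PetriNet.pre, hflPT, hnoex]
          · simp [PetriNet.post, hflTP, hen]
        · have hk : states k ∈ r := (h2 _ _ step0).1
          have hk1 : states (k + 1) ∉ r := (h2 _ _ step0).2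
          have hnoen : ¬ ts.Enters r e := by
            rintro ⟨s, s', hst, hsr, -⟩; exact hsr (h2 _ _ hst).1
          have hex : ts.Exits r e := ⟨_, _, step0, hk, hk1⟩
          refine ⟨1, 0, ?_, ?_, by simp [hk], by simp [hk, hk1]⟩
          · simp [PetriNet.pre, hflPT, hex]
          · simp [PetriNet.post, hflTP, hnoen]
        · have hiff : states k ∈ r ↔ states (k + 1) ∈ r := h3 _ _ step0
          have hnoex : ¬ ts.Exits r e := by
            rintro ⟨s, s', hst, hsr, hs'r⟩; exact hs'r ((h3 _ _ hst).1 hsr)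
          have hnoen : ¬ ts.Enters r e := by
            rintro ⟨s, s', hst, hsr, hs'r⟩; exact hsr ((h3 _ _ hst).2 hs'r)
          refine ⟨0, 0, ?_, ?_, by simp, by simp [hiff]⟩
          · simp [PetriNet.pre, hflPT, hnoex]
          · simp [PetriNet.post, hflTP, hnoen]
      obtain ⟨a, b, hpre, hpost, hle, heq⟩ := key
      set m1' : (P ⊕ Unit) → ℕ :=
        Sum.elim m1 (fun _ => if states (k + 1) ∈ r then 1 else 0) with hm1'
      have hfire : (addPlaces N ts (fun _ : Unit => r)).Fires m' t m1' := by
        constructor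
        · rintro (p | ⟨⟩)
          · show N.pre t p ≤ m' (Sum.inl p); rw [hagree p]; exact hf.1 p
          · rw [hpre, hind]; exact hle
        · rintro (p | ⟨⟩)
          · show m1 p = m' (Sum.inl p) - N.pre t p + N.post t p
            rw [hagree p]; exact hf.2 p
          · show (if states (k + 1) ∈ r then 1 else 0) = _
            rw [hpre, hpost, hind, heq]
      have hstep' : ∀ i (hi : i < σ''.length),
          ts.step (states (k + 1 + i)) (some (σ''[i]'hi)) (states (k + 1 + i + 1)) := by
        intro i hi
        have h2 := hstep (i + 1) (by simpa using Nat.succ_lt_succ hi)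
        simp only [List.getElem_cons_succ] at h2
        have e1 : k + (i + 1) = k + 1 + i := by omega
        rw [e1] at h2
        exact h2
      obtain ⟨mfin', hseq', ha', hi'⟩ :=
        ih (k + 1) σ'' m1 m1' (fun p => rfl) rfl rfl hstep' mfin hs
      refine ⟨mfin', PetriNet.FiringSeq.cons hfire hseq', ha', ?_⟩
      rw [hi']
      have : k + 1 + σ''.length = k + (e :: σ'').length := by simp; omega
      rw [this]

/-- if a trace `σ` is feasible in a τ-free transition system
`TS` via a path `s₀ → … → sₙ` and is accepted by a Petri net `N` via a firing
sequence, then the same sequence of transitions is firable in the net `N_r`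
obtained by adding the place `p` corresponding to a region `r` of `TS`: the
resulting markings agree with those of `N` on every old place, the token count
of `p` after any prefix whose non-τ label sequence is `⟨e₁,…,e_k⟩` is `1` iff
`s_k ∈ r`, the final marking reached is final in `N_r`, and hence `σ` is
accepted by `N_r`. -/
theorem trace_accepted_by_region_extension {P T E S : Type} [Finite P] [Finite T]
    (ts : TransSys S E) (hτ : ts.TauFree)
    (r : Set S) (hr : ts.IsRegion r)
    (N : PetriNet P T E) (m0 : P → ℕ) (Mf : Set (P → ℕ))
    (σ : List E) (states : ℕ → S)
    (hs0 : states 0 = ts.init)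
    (hsfin : states σ.length ∈ ts.fin)
    (hstep : ∀ k (hk : k < σ.length),
      ts.step (states k) (some (σ[k]'hk)) (states (k + 1)))
    (tl : List T) (mfin : P → ℕ)
    (hseq : N.FiringSeq m0 tl mfin) (hmfin : mfin ∈ Mf)
    (hlab : tl.filterMap N.label = σ) :
    ∃ mfin' : (P ⊕ Unit) → ℕ,
      (addPlaces N ts (fun _ : Unit => r)).FiringSeq
          (addInit ts (fun _ : Unit => r) m0) tl mfin' ∧
      (∀ p, mfin' (Sum.inl p) = mfin p) ∧
      mfin' ∈ addFinals ts (fun _ : Unit => r) Mf ∧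
      (∀ j, j ≤ tl.length → ∀ (mj : P → ℕ) (mj' : (P ⊕ Unit) → ℕ),
        N.FiringSeq m0 (tl.take j) mj →
        (addPlaces N ts (fun _ : Unit => r)).FiringSeq
          (addInit ts (fun _ : Unit => r) m0) (tl.take j) mj' →
        (∀ p, mj' (Sum.inl p) = mj p) ∧
        mj' (Sum.inr ()) =
          (if states (((tl.take j).filterMap N.label).length) ∈ r then 1 else 0)) ∧
      (addPlaces N ts (fun _ : Unit => r)).Accepts
        (addInit ts (fun _ : Unit => r) m0)
        (addFinals ts (fun _ : Unit => r) Mf) σ := by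
  classical
  have hind0 : (addInit ts (fun _ : Unit => r) m0) (Sum.inr ())
      = (if states 0 ∈ r then 1 else 0) := by
    show (if ts.init ∈ r then 1 else 0) = _
    rw [hs0]
  obtain ⟨mfin', hseq', hagree', hind'⟩ :=
    region_ext_seq ts r hr N states tl 0 σ m0 (addInit ts (fun _ : Unit => r) m0)
      (fun p => rfl) hind0 hlab
      (by intro i hi; simpa using hstep i hi) mfin hseq
  simp only [Nat.zero_add] at hind'
  have hfin' : mfin' ∈ addFinals ts (fun _ : Unit => r) Mf := by
    constructor
    · have h : (fun p => mfin' (Sum.inl p)) = mfin := funext hagree'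
      rw [h]; exact hmfin
    · rintro ⟨⟩
      by_cases h : states σ.length ∈ r
      · exact Or.inr ⟨by rw [hind', if_pos h], states σ.length, hsfin, h⟩
      · exact Or.inl (by rw [hind', if_neg h])
  refine ⟨mfin', hseq', hagree', hfin', ?_, ⟨tl, mfin', hseq', hfin', hlab⟩⟩
  intro j hj mj mj' hmj hmj'
  set A := (tl.take j).filterMap N.label with hA
  have hsplit : A ++ (tl.drop j).filterMap N.label = σ := by
    rw [hA, ← List.filterMap_append, List.take_append_drop, hlab]
  have hstepA : ∀ i (hi : i < A.length),
      ts.step (states (0 + i)) (some (A[i]'hi)) (states (0 + i + 1)) := by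
    intro i hi
    have hiσ : i < σ.length := by
      rw [← hsplit, List.length_append]; omega
    have hA_i : A[i]'hi = σ[i]'hiσ := by
      subst hsplit
      exact (List.getElem_append_left hi).symm
    rw [hA_i]
    simpa using hstep i hiσ
  obtain ⟨m'', hseq'', hagree'', hind''⟩ :=
    region_ext_seq ts r hr N states (tl.take j) 0 A m0
      (addInit ts (fun _ : Unit => r) m0) (fun p => rfl) hind0 rfl hstepA mj hmj
  have hd : mj' = m'' :=
    PetriNet.seq_det (addPlaces N ts (fun _ : Unit => r)) hmj' hseq''
  subst hd
  refine ⟨hagree'', ?_⟩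
  rw [hind'', Nat.zero_add]
end
end

section
/- Let TS be a τ-free transition system and r a region of TS with set of entering events E_ent and set of exiting events E_exit, such that neither the initial state of TS nor any final state of TS belongs to r. Then in every feasible trace ⟨e_1,…,e_n⟩ of TS the occurrences of E_ent and E_exit are in a following relation: (1) for every index k with e_k ∈ E_ent there exists an index m > k with e_m ∈ E_exit such that e_j ∉ E_ent for all k < j < m; and (2) for every index m with e_m ∈ E_exit there exists an index k < m with e_k ∈ E_ent such that e_j ∉ E_exit for all k < j < m. -/
open scoped Classical

noncomputable section

/-- if a region `r` of a τ-free transition system contains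
neither the initial state nor any final state, then in every feasible trace the
entering and exiting events of `r` are in a following relation: every entering
occurrence is followed by an exiting occurrence with no entering occurrence in
between, and every exiting occurrence is preceded by an entering occurrence
with no exiting occurrence in between. -/
theorem following_relation_of_region {S E : Type}
    (ts : TransSys S E) (hτ : ts.TauFree)
    (r : Set S) (hr : ts.IsRegion r)
    (hinit : ts.init ∉ r) (hfin : ∀ s ∈ ts.fin, s ∉ r)
    (n : ℕ) (states : ℕ → S) (events : ℕ → E)
    (hpath : ∀ k, k < n →
      ts.step (states k) (some (events (k + 1))) (states (k + 1)))
    (hs0 : states 0 = ts.init) (hsn : states n ∈ ts.fin) :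
    (∀ k, 1 ≤ k → k ≤ n → ts.Enters r (events k) →
      ∃ m, k < m ∧ m ≤ n ∧ ts.Exits r (events m) ∧
        ∀ j, k < j → j < m → ¬ ts.Enters r (events j)) ∧
    (∀ m, 1 ≤ m → m ≤ n → ts.Exits r (events m) →
      ∃ k, 1 ≤ k ∧ k < m ∧ ts.Enters r (events k) ∧
        ∀ j, k < j → j < m → ¬ ts.Exits r (events j)) := by
  -- Auxiliary facts about the region
  have enters_all : ∀ e, ts.Enters r e →
      ∀ s s', ts.step s (some e) s' → s ∉ r ∧ s' ∈ r := by
    intro e he s s' hstep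
    obtain ⟨u, u', hu, hu1, hu2⟩ := he
    rcases hr e with h | h | h
    · exact h s s' hstep
    · exact absurd (h u u' hu).1 hu1
    · exact absurd ((h u u' hu).mpr hu2) hu1
  have exits_all : ∀ e, ts.Exits r e →
      ∀ s s', ts.step s (some e) s' → s ∈ r ∧ s' ∉ r := by
    intro e he s s' hstep
    obtain ⟨u, u', hu, hu1, hu2⟩ := he
    rcases hr e with h | h | h
    · exact absurd (h u u' hu).2 hu2
    · exact h s s' hstep
    · exact absurd ((h u u' hu).mp hu1) hu2
  have hn0 : states 0 ∉ r := hs0 ▸ hinit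
  have hnn : states n ∉ r := hfin _ hsn
  constructor
  · intro k hk1 hkn hent
    obtain ⟨k', rfl⟩ : ∃ k', k = k' + 1 := ⟨k - 1, (Nat.succ_pred_eq_of_pos hk1).symm⟩
    have hstepk := hpath k' (by omega)
    have hkin : states (k' + 1) ∈ r := (enters_all _ hent _ _ hstepk).2
    have hex : ∃ m, k' + 1 < m ∧ m ≤ n ∧ states m ∉ r := by
      refine ⟨n, ?_, le_refl n, hnn⟩
      rcases Nat.lt_or_ge (k' + 1) n with h | h
      · exact h
      · exact absurd hkin (by have : k' + 1 = n := le_antisymm hkn h; rw [this]; exact hnn)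
    classical
    obtain ⟨m, ⟨hm1, hm2, hm3⟩, hmin⟩ :
        ∃ m, (k' + 1 < m ∧ m ≤ n ∧ states m ∉ r) ∧
          ∀ i, i < m → ¬(k' + 1 < i ∧ i ≤ n ∧ states i ∉ r) :=
      ⟨Nat.find hex, Nat.find_spec hex, fun i hi => Nat.find_min hex hi⟩
    have hbetween : ∀ i, k' + 1 ≤ i → i < m → states i ∈ r := by
      intro i hi1 hi2
      rcases eq_or_lt_of_le hi1 with h | h
      · exact h ▸ hkin
      · by_contra hc
        exact (hmin i hi2) ⟨h, by omega, hc⟩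
    obtain ⟨m', rfl⟩ : ∃ m', m = m' + 1 := ⟨m - 1, (Nat.succ_pred_eq_of_pos (by omega)).symm⟩
    have hstepm := hpath m' (by omega)
    have hm'in : states m' ∈ r := hbetween m' (by omega) (by omega)
    refine ⟨m' + 1, hm1, hm2, ⟨states m', states (m' + 1), hstepm, hm'in, hm3⟩, ?_⟩
    intro j hj1 hj2 hentj
    obtain ⟨j', rfl⟩ : ∃ j', j = j' + 1 := ⟨j - 1, (Nat.succ_pred_eq_of_pos (by omega)).symm⟩
    have hstepj := hpath j' (by omega)
    have := (enters_all _ hentj _ _ hstepj).1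
    exact this (hbetween j' (by omega) (by omega))
  · intro m hm1 hmn hexm
    obtain ⟨m', rfl⟩ : ∃ m'', m = m'' + 1 := ⟨m - 1, (Nat.succ_pred_eq_of_pos hm1).symm⟩
    have hstepm := hpath m' (by omega)
    have hm'in : states m' ∈ r := (exits_all _ hexm _ _ hstepm).1
    classical
    set k' := Nat.findGreatest (fun j => states j ∉ r) m' with hk'def
    have hk'spec : states k' ∉ r :=
      Nat.findGreatest_spec (P := fun j => states j ∉ r) (Nat.zero_le m') hn0
    have hk'le : k' ≤ m' := Nat.findGreatest_le m'
    have hk'ne : k' ≠ m' := fun h => (h ▸ hk'spec) hm'in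
    have hgr : ∀ j, k' < j → j ≤ m' → states j ∈ r := by
      intro j hj1 hj2
      by_contra hc
      exact Nat.findGreatest_is_greatest (P := fun j => states j ∉ r) hj1 hj2 hc
    have hstepk := hpath k' (by omega)
    have hkin : states (k' + 1) ∈ r := hgr (k' + 1) (by omega) (by omega)
    refine ⟨k' + 1, by omega, by omega, ⟨states k', states (k' + 1), hstepk, hk'spec, hkin⟩, ?_⟩
    intro j hj1 hj2 hexj
    obtain ⟨j', rfl⟩ : ∃ j'', j = j'' + 1 := ⟨j - 1, (Nat.succ_pred_eq_of_pos (by omega)).symm⟩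
    have hstepj := hpath j' (by omega)
    have := (exits_all _ hexj _ _ hstepj).2
    exact this (hgr (j' + 1) (by omega) (by omega))
end
end
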